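/- arXiv:1709.06688 — 4 statements merged into one kernel-verified Lean document; each statement's English description precedes it below -/
import Mathlib

section
/- Let G_0 be a graph and G_j, G_k be graphs obtained from G_0 by adding exactly one edge e_j = (u_j, v_j) and e_k = (u_k, v_k) respectively. For the ferromagnetic zero-field Ising measures P_0, P_j, P_k at inverse temperature θ ≥ 0 on {±1}^d, one has E_0[(P_j/P_0)·(P_k/P_0)] = 1 + (E_j[X_{u_k} X_{v_k}] − E_0[X_{u_k} X_{v_k}]) / (E_0[X_{u_k} X_{v_k}] + coth(θ)), and in particular E_0[(P_j/P_0)·(P_k/P_0)] ≤ 1 + tanh(θ)·(E_j[X_{u_k} X_{v_k}] − E_0[X_{u_k} X_{v_k}]) provided E_0[X_{u_k} X_{v_k}] ≥ 0. -/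
/-- The spin value of a Boolean configuration entry. -/
def spin (b : Bool) : ℝ := if b then 1 else -1

/-- Energy of the zero-field Ising model with edge set `E`, all edge weights one. -/
noncomputable def isingEnergy (d : ℕ) (θ : ℝ) (E : Finset (Fin d × Fin d))
    (x : Fin d → Bool) : ℝ :=
  θ * ∑ e ∈ E, spin (x e.1) * spin (x e.2)

/-- Partition function. -/
noncomputable def isingZ (d : ℕ) (θ : ℝ) (E : Finset (Fin d × Fin d)) : ℝ :=
  ∑ x : Fin d → Bool, Real.exp (isingEnergy d θ E x)

/-- Gibbs probability of a configuration. -/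
noncomputable def isingP (d : ℕ) (θ : ℝ) (E : Finset (Fin d × Fin d))
    (x : Fin d → Bool) : ℝ :=
  Real.exp (isingEnergy d θ E x) / isingZ d θ E

/-- Expectation under the Gibbs measure. -/
noncomputable def isingE (d : ℕ) (θ : ℝ) (E : Finset (Fin d × Fin d))
    (f : (Fin d → Bool) → ℝ) : ℝ :=
  ∑ x : Fin d → Bool, f x * isingP d θ E x

/-!
Adding an edge `e` to `E` multiplies the Gibbs weight by `exp (θ σ_e) = cosh θ + sinh θ σ_e`,
where `σ_e = X_u X_v`, so `P_e / P_E = (cosh θ + sinh θ σ_e) / (cosh θ + sinh θ E_E[σ_e])`.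
Hence `E_0[(P_j/P_0)(P_k/P_0)] = E_j[P_k/P_0] = (cosh θ + sinh θ E_j[σ_k]) / (cosh θ + sinh θ m)`
with `m = E_0[σ_k]`, which rearranges to the identity. The bound needs `m ≤ E_j[σ_k]`, i.e.
Griffiths' second inequality `E[σ_j] E[σ_k] ≤ E[σ_j σ_k]`; Ginibre's duplicate-variable trick
reduces it to the first one, the nonnegativity of all spin moments under nonnegative couplings,
which follows by expanding each `exp (β_e σ_e)` as `cosh β_e + sinh β_e σ_e`.
-/

open Finset Real

variable {ι : Type*}

def bond (e : ι × ι) (x : ι → Bool) : ℝ := spin (x e.1) * spin (x e.2)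

def spinProd (A : Multiset ι) (x : ι → Bool) : ℝ := (A.map fun a => spin (x a)).prod

noncomputable def gibbsWeight (β : ι × ι → ℝ) (E : Finset (ι × ι)) (x : ι → Bool) : ℝ :=
  exp (∑ e ∈ E, β e * bond e x)

def spinMul (x t : ι → Bool) : ι → Bool := fun i => x i == t i

lemma spin_beq (a b : Bool) : spin (a == b) = spin a * spin b := by
  cases a <;> cases b <;> norm_num [spin]

lemma abs_bond (e : ι × ι) (x : ι → Bool) : |bond e x| = 1 := by
  unfold bond spin; split_ifs <;> norm_num

lemma exp_mul_bond (c : ℝ) (e : ι × ι) (x : ι → Bool) :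
    exp (c * bond e x) = cosh c + sinh c * bond e x := by
  unfold bond spin; split_ifs <;> simp [cosh_eq, sinh_eq] <;> ring

lemma bond_spinMul (e : ι × ι) (x t : ι → Bool) :
    bond e (spinMul x t) = bond e x * bond e t := by
  simp only [bond, spinMul, spin_beq]; ring

lemma spinMul_involutive (x : ι → Bool) : Function.Involutive (spinMul x) := by
  intro t; funext i; simp only [spinMul]; cases x i <;> cases t i <;> rfl

lemma spinProd_cons_cons (a b : ι) (A : Multiset ι) (x : ι → Bool) :
    spinProd (a ::ₘ b ::ₘ A) x = bond (a, b) x * spinProd A x := by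
  simp [spinProd, bond, mul_assoc]

lemma gibbsWeight_mul_gibbsWeight_spinMul (β : ι × ι → ℝ) (E : Finset (ι × ι))
    (x t : ι → Bool) :
    gibbsWeight β E x * gibbsWeight β E (spinMul x t)
      = gibbsWeight (fun e => β e * (1 + bond e t)) E x := by
  simp only [gibbsWeight, ← exp_add, ← sum_add_distrib, bond_spinMul]
  congr 1; refine sum_congr rfl fun e _ => ?_; ring

section Griffiths

variable [DecidableEq ι]

lemma gibbsWeight_insert (β : ι × ι → ℝ) {E : Finset (ι × ι)} {e : ι × ι} (he : e ∉ E)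
    (x : ι → Bool) :
    gibbsWeight β (insert e E) x = (cosh (β e) + sinh (β e) * bond e x) * gibbsWeight β E x := by
  rw [gibbsWeight, sum_insert he, exp_add, exp_mul_bond, gibbsWeight]

variable [Fintype ι]

lemma sum_spinProd_nonneg (A : Multiset ι) : 0 ≤ ∑ x : ι → Bool, spinProd A x := by
  have hprod (x : ι → Bool) : spinProd A x = ∏ i, spin (x i) ^ A.count i := by
    rw [spinProd, prod_multiset_map_count]
    refine prod_subset (subset_univ _) fun i _ hi => ?_
    rw [Multiset.count_eq_zero_of_notMem (by simpa using hi), pow_zero]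
  simp_rw [hprod, ← Fintype.prod_sum (fun i (b : Bool) => spin b ^ A.count i)]
  refine prod_nonneg fun i _ => ?_
  rcases (A.count i).even_or_odd with h | h <;> simp [spin, h.neg_one_pow]

/-- Griffiths' first inequality. -/
theorem sum_spinProd_mul_gibbsWeight_nonneg {β : ι × ι → ℝ} {E : Finset (ι × ι)}
    (hβ : ∀ e ∈ E, 0 ≤ β e) (A : Multiset ι) :
    0 ≤ ∑ x : ι → Bool, spinProd A x * gibbsWeight β E x := by
  induction E using Finset.induction_on generalizing A with
  | empty => simpa [gibbsWeight] using sum_spinProd_nonneg A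
  | @insert e E he ih =>
    have hβE : ∀ e ∈ E, 0 ≤ β e := fun e h => hβ e (mem_insert_of_mem h)
    have hexpand (x : ι → Bool) : spinProd A x * gibbsWeight β (insert e E) x
        = cosh (β e) * (spinProd A x * gibbsWeight β E x)
          + sinh (β e) * (spinProd (e.1 ::ₘ e.2 ::ₘ A) x * gibbsWeight β E x) := by
      rw [gibbsWeight_insert β he, spinProd_cons_cons]; ring
    simp_rw [hexpand, sum_add_distrib, ← mul_sum]
    exact add_nonneg (mul_nonneg (cosh_pos _).le (ih hβE A))
      (mul_nonneg (sinh_nonneg_iff.mpr (hβ e (mem_insert_self e E))) (ih hβE _))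

/-- Ginibre's duplicate-variable identity: substituting `y = spinMul x t` in the double sum
turns the product of two Gibbs weights into a single Gibbs weight with couplings
`β e * (1 + bond e t) ≥ 0`. -/
lemma sum_mul_sum_sub_sum_mul_sum_eq (β : ι × ι → ℝ) (E : Finset (ι × ι)) (f g : ι × ι) :
    (∑ x, gibbsWeight β E x) * (∑ x, bond f x * bond g x * gibbsWeight β E x)
      - (∑ x, bond f x * gibbsWeight β E x) * (∑ x, bond g x * gibbsWeight β E x)
      = ∑ t, (1 - bond g t) * ∑ x, bond f x * bond g x *
          gibbsWeight (fun e => β e * (1 + bond e t)) E x := by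
  set w := gibbsWeight β E
  have hinner (x : ι → Bool) :
      ∑ y, (bond f x * bond g x * w x * w y - bond f x * w x * (bond g y * w y))
        = ∑ t, (1 - bond g t) * (bond f x * bond g x *
            gibbsWeight (fun e => β e * (1 + bond e t)) E x) := by
    rw [← Equiv.sum_comp (spinMul_involutive x).toPerm]
    refine sum_congr rfl fun t _ => ?_
    simp only [Function.Involutive.coe_toPerm, ← gibbsWeight_mul_gibbsWeight_spinMul,
      bond_spinMul]
    ring
  simp only [mul_comm (∑ x, w x), sum_mul_sum, ← sum_sub_distrib, hinner]
  rw [sum_comm]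
  simp only [mul_sum]

/-- Griffiths' second inequality. -/
theorem sum_bond_mul_sum_bond_le {β : ι × ι → ℝ} {E : Finset (ι × ι)} (hβ : ∀ e ∈ E, 0 ≤ β e)
    (f g : ι × ι) :
    (∑ x, bond f x * gibbsWeight β E x) * (∑ x, bond g x * gibbsWeight β E x)
      ≤ (∑ x, gibbsWeight β E x) * (∑ x, bond f x * bond g x * gibbsWeight β E x) := by
  rw [← sub_nonneg, sum_mul_sum_sub_sum_mul_sum_eq]
  refine sum_nonneg fun t _ => mul_nonneg ?_ ?_
  · linarith [(abs_le.mp (abs_bond g t).le).2]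
  · have hβt : ∀ e ∈ E, 0 ≤ β e * (1 + bond e t) := fun e he =>
      mul_nonneg (hβ e he) (by linarith [(abs_le.mp (abs_bond e t).le).1])
    have h := sum_spinProd_mul_gibbsWeight_nonneg hβt (f.1 ::ₘ f.2 ::ₘ g.1 ::ₘ g.2 ::ₘ 0)
    simp only [spinProd_cons_cons, Prod.mk.eta] at h
    simpa [spinProd, mul_assoc] using h

end Griffiths

section Ising

variable {d : ℕ} {θ : ℝ} {E : Finset (Fin d × Fin d)}

lemma exp_isingEnergy (x : Fin d → Bool) :
    exp (isingEnergy d θ E x) = gibbsWeight (fun _ => θ) E x := by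
  rw [isingEnergy, mul_sum]; rfl

lemma isingZ_pos : 0 < isingZ d θ E :=
  sum_pos (fun _ _ => exp_pos _) univ_nonempty

lemma isingP_pos (x : Fin d → Bool) : 0 < isingP d θ E x :=
  div_pos (exp_pos _) isingZ_pos

lemma isingZ_eq_sum_gibbsWeight : isingZ d θ E = ∑ x, gibbsWeight (fun _ => θ) E x := by
  simp only [isingZ, exp_isingEnergy]

lemma isingE_eq_sum_div (f : (Fin d → Bool) → ℝ) :
    isingE d θ E f = (∑ x, f x * gibbsWeight (fun _ => θ) E x) / isingZ d θ E := by
  simp only [isingE, isingP, exp_isingEnergy, sum_div, mul_div_assoc]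

lemma isingE_const (a : ℝ) : isingE d θ E (fun _ => a) = a := by
  rw [isingE_eq_sum_div, ← mul_sum, ← isingZ_eq_sum_gibbsWeight,
    mul_div_cancel_right₀ _ isingZ_pos.ne']

lemma isingE_add (f g : (Fin d → Bool) → ℝ) :
    isingE d θ E (fun x => f x + g x) = isingE d θ E f + isingE d θ E g := by
  simp only [isingE, add_mul, sum_add_distrib]

lemma isingE_const_mul (a : ℝ) (f : (Fin d → Bool) → ℝ) :
    isingE d θ E (fun x => a * f x) = a * isingE d θ E f := by
  simp only [isingE, mul_sum, mul_assoc]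

lemma isingE_div_const (f : (Fin d → Bool) → ℝ) (a : ℝ) :
    isingE d θ E (fun x => f x / a) = isingE d θ E f / a := by
  simp only [isingE, sum_div, div_mul_eq_mul_div]

lemma isingE_isingP_div_mul (E' : Finset (Fin d × Fin d)) (f : (Fin d → Bool) → ℝ) :
    isingE d θ E (fun x => isingP d θ E' x / isingP d θ E x * f x) = isingE d θ E' f := by
  refine sum_congr rfl fun x _ => ?_
  field_simp [(isingP_pos (θ := θ) (E := E) x).ne']

lemma isingE_bond_mul_isingE_bond_le (hθ : 0 ≤ θ) (f g : Fin d × Fin d) :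
    isingE d θ E (bond f) * isingE d θ E (bond g)
      ≤ isingE d θ E (fun x => bond f x * bond g x) := by
  have hZ : 0 < isingZ d θ E := isingZ_pos
  simp only [isingE_eq_sum_div]
  rw [div_mul_div_comm, div_le_div_iff₀ (mul_pos hZ hZ) hZ]
  rw [isingZ_eq_sum_gibbsWeight] at hZ ⊢
  linarith [mul_le_mul_of_nonneg_right
    (sum_bond_mul_sum_bond_le (E := E) (fun _ _ => hθ) f g) hZ.le]

variable {e : Fin d × Fin d}

lemma isingZ_insert (he : e ∉ E) :
    isingZ d θ (insert e E) = isingZ d θ E * (cosh θ + sinh θ * isingE d θ E (bond e)) := by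
  rw [isingE_eq_sum_div]
  field_simp [isingZ_pos.ne']
  rw [isingZ_eq_sum_gibbsWeight, isingZ_eq_sum_gibbsWeight]
  simp only [gibbsWeight_insert _ he, add_mul, sum_add_distrib, mul_assoc, ← mul_sum]
  ring

lemma cosh_add_sinh_mul_isingE_bond_pos (he : e ∉ E) :
    0 < cosh θ + sinh θ * isingE d θ E (bond e) :=
  pos_of_mul_pos_right (isingZ_insert he ▸ isingZ_pos) isingZ_pos.le

lemma isingP_insert_div_isingP (he : e ∉ E) (x : Fin d → Bool) :
    isingP d θ (insert e E) x / isingP d θ E x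
      = (cosh θ + sinh θ * bond e x) / (cosh θ + sinh θ * isingE d θ E (bond e)) := by
  have hw : 0 < gibbsWeight (fun _ => θ) E x := exp_pos _
  rw [isingP, isingP, exp_isingEnergy, exp_isingEnergy, gibbsWeight_insert _ he, isingZ_insert he]
  field_simp [hw.ne', isingZ_pos.ne', (cosh_add_sinh_mul_isingE_bond_pos he).ne']

lemma isingE_insert (he : e ∉ E) (f : (Fin d → Bool) → ℝ) :
    isingE d θ (insert e E) f
      = (cosh θ * isingE d θ E f + sinh θ * isingE d θ E (fun x => bond e x * f x))
        / (cosh θ + sinh θ * isingE d θ E (bond e)) := by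
  rw [← isingE_isingP_div_mul (E := E)]
  simp_rw [isingP_insert_div_isingP he, div_mul_eq_mul_div, add_mul, mul_assoc]
  rw [isingE_div_const, isingE_add, isingE_const_mul, isingE_const_mul]

lemma isingE_bond_le_isingE_insert_bond (hθ : 0 ≤ θ) (he : e ∉ E) (f : Fin d × Fin d) :
    isingE d θ E (bond f) ≤ isingE d θ (insert e E) (bond f) := by
  rw [isingE_insert he, le_div_iff₀ (cosh_add_sinh_mul_isingE_bond_pos he)]
  linarith [mul_le_mul_of_nonneg_left (isingE_bond_mul_isingE_bond_le (E := E) hθ e f)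
    (sinh_nonneg_iff.mpr hθ)]

lemma isingE_isingP_div_mul_isingP_insert_div (he : e ∉ E) (E' : Finset (Fin d × Fin d)) :
    isingE d θ E (fun x =>
        (isingP d θ E' x / isingP d θ E x) * (isingP d θ (insert e E) x / isingP d θ E x))
      = (cosh θ + sinh θ * isingE d θ E' (bond e))
        / (cosh θ + sinh θ * isingE d θ E (bond e)) := by
  rw [isingE_isingP_div_mul]
  simp_rw [isingP_insert_div_isingP he]
  rw [isingE_div_const, isingE_add, isingE_const, isingE_const_mul]

end Ising

theorem edge_addition_chi_sq_general (d : ℕ) (θ : ℝ) (hθ : 0 < θ)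
    (E0 : Finset (Fin d × Fin d)) (ej ek : Fin d × Fin d)
    (hej : ej ∉ E0) (hek : ek ∉ E0) :
    isingE d θ E0 (fun x =>
        (isingP d θ (insert ej E0) x / isingP d θ E0 x) *
        (isingP d θ (insert ek E0) x / isingP d θ E0 x))
      = 1 +
        (isingE d θ (insert ej E0) (fun x => spin (x ek.1) * spin (x ek.2))
          - isingE d θ E0 (fun x => spin (x ek.1) * spin (x ek.2)))
        / (isingE d θ E0 (fun x => spin (x ek.1) * spin (x ek.2))
            + Real.cosh θ / Real.sinh θ)
    ∧ (0 ≤ isingE d θ E0 (fun x => spin (x ek.1) * spin (x ek.2)) →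
        isingE d θ E0 (fun x =>
            (isingP d θ (insert ej E0) x / isingP d θ E0 x) *
            (isingP d θ (insert ek E0) x / isingP d θ E0 x))
          ≤ 1 + Real.tanh θ *
              (isingE d θ (insert ej E0) (fun x => spin (x ek.1) * spin (x ek.2))
                - isingE d θ E0 (fun x => spin (x ek.1) * spin (x ek.2)))) := by
  rw [show (fun x => spin (x ek.1) * spin (x ek.2)) = bond ek from rfl, tanh_eq_sinh_div_cosh,
    isingE_isingP_div_mul_isingP_insert_div hek]
  set a := isingE d θ (insert ej E0) (bond ek)
  set m := isingE d θ E0 (bond ek)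
  have hs : 0 < sinh θ := sinh_pos_iff.mpr hθ
  have hD : 0 < cosh θ + sinh θ * m := cosh_add_sinh_mul_isingE_bond_pos hek
  have hchi : (cosh θ + sinh θ * a) / (cosh θ + sinh θ * m)
      = 1 + (a - m) / (m + cosh θ / sinh θ) := by
    rw [show m + cosh θ / sinh θ = (cosh θ + sinh θ * m) / sinh θ by field_simp; ring]
    field_simp
    ring
  refine ⟨hchi, fun hm => ?_⟩
  have hma : 0 ≤ a - m := sub_nonneg.mpr (isingE_bond_le_isingE_insert_bond hθ.le hej ek)
  calc _ = 1 + (a - m) / (m + cosh θ / sinh θ) := hchi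
    _ ≤ 1 + (a - m) / (cosh θ / sinh θ) := by
      gcongr
      linarith
    _ = 1 + sinh θ / cosh θ * (a - m) := by rw [div_div_eq_mul_div]; ring

/-- Lemma (Edge Addition): for graphs `G_j, G_k` obtained from `G_0` by adding single edges
`e_j, e_k`, the `P_0`-expectation of `(P_j/P_0)(P_k/P_0)` equals
`1 + (E_j[X_{u_k}X_{v_k}] - E_0[X_{u_k}X_{v_k}])/(E_0[X_{u_k}X_{v_k}] + coth θ)`, and is bounded
by `1 + tanh θ (E_j[X_{u_k}X_{v_k}] - E_0[X_{u_k}X_{v_k}])` when `E_0[X_{u_k}X_{v_k}] ≥ 0`. -/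
theorem edge_addition_chi_sq (d : ℕ) (θ : ℝ) (hθ : 0 < θ)
    (E0 : Finset (Fin d × Fin d)) (ej ek : Fin d × Fin d)
    (hej : ej ∉ E0) (hek : ek ∉ E0) (hej' : ej.1 ≠ ej.2) (hek' : ek.1 ≠ ek.2) :
    isingE d θ E0 (fun x =>
        (isingP d θ (insert ej E0) x / isingP d θ E0 x) *
        (isingP d θ (insert ek E0) x / isingP d θ E0 x))
      = 1 +
        (isingE d θ (insert ej E0) (fun x => spin (x ek.1) * spin (x ek.2))
          - isingE d θ E0 (fun x => spin (x ek.1) * spin (x ek.2)))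
        / (isingE d θ E0 (fun x => spin (x ek.1) * spin (x ek.2))
            + Real.cosh θ / Real.sinh θ)
    ∧ (0 ≤ isingE d θ E0 (fun x => spin (x ek.1) * spin (x ek.2)) →
        isingE d θ E0 (fun x =>
            (isingP d θ (insert ej E0) x / isingP d θ E0 x) *
            (isingP d θ (insert ek E0) x / isingP d θ E0 x))
          ≤ 1 + Real.tanh θ *
              (isingE d θ (insert ej E0) (fun x => spin (x ek.1) * spin (x ek.2))
                - isingE d θ E0 (fun x => spin (x ek.1) * spin (x ek.2)))) :=
  edge_addition_chi_sq_general d θ hθ E0 ej ek hej hek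
end

section
/- Let G be the graph on vertex set V consisting of a complete bipartite graph with left part L of size l and right part R of size r ≥ 3, at inverse temperature θ > 0 with all edge weights 1. For two right-side vertices k, ℓ ∈ R, the zero-field Ising measure satisfies P(X_k·X_ℓ = 1)/P(X_k·X_ℓ = −1) = [Σ_{m=0}^{r−2} binomial(r−2, m)·cosh(θ(r − 2m))^l] / [Σ_{m=0}^{r−2} binomial(r−2, m)·cosh(θ(r − 2m − 2))^l]. -/
/-- Energy of the zero-field ferromagnetic Ising model on the complete bipartite graph
with left part `Fin l` and right part `Fin r`, at inverse temperature `θ`. -/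
noncomputable def bicliqueEnergy (l r : ℕ) (θ : ℝ)
    (p : (Fin l → Bool) × (Fin r → Bool)) : ℝ :=
  θ * (∑ u, spin (p.1 u)) * (∑ v, spin (p.2 v))

/-!
The energy is `θ · M_L · M_R` with `M_L`, `M_R` the magnetizations of the two sides, so summing
out the left spins turns the weight of a right configuration into `(2 cosh (θ M_R))^l`. Once the
spins at `k` and `ℓ` are fixed, the other `r - 2` right spins have magnetization `r - 2 - 2m`
when `m` of them are down, which happens in `binomial (r - 2) m` ways. In the numerator the
down-down part equals the up-up part by the spin flip `m ↦ r - 2 - m` (`cosh` is even), and the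
two mixed parts of the denominator coincide; the common factor `2^(l+1)` cancels.
-/

open Finset Real

theorem sum_choose_mul_comp_neg (n : ℕ) (h : ℝ → ℝ) :
    ∑ m ∈ range (n + 1), (n.choose m : ℝ) * h (n - 2 * m) =
      ∑ m ∈ range (n + 1), (n.choose m : ℝ) * h (-(n - 2 * m)) := by
  rw [← sum_range_reflect]
  refine sum_congr rfl fun m hm => ?_
  have hmn : m ≤ n := Nat.lt_succ_iff.mp (mem_range.mp hm)
  rw [add_tsub_cancel_right, Nat.choose_symm hmn, Nat.cast_sub hmn]
  ring_nf

section Magnetization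

variable {ι : Type*} [Fintype ι]

noncomputable def magnetization (y : ι → Bool) : ℝ := ∑ i, spin (y i)

variable [DecidableEq ι]

theorem sum_exp_mul_magnetization (c : ℝ) :
    ∑ y : ι → Bool, exp (c * magnetization y) = (2 * cosh c) ^ Fintype.card ι := by
  have hsite : ∑ b, exp (c * spin b) = 2 * cosh c := by
    rw [Fintype.sum_bool, cosh_eq]
    simp only [spin, ↓reduceIte, Bool.false_eq_true, mul_one, mul_neg_one]
    ring
  simp_rw [magnetization, mul_sum, exp_sum]
  rw [← Fintype.prod_sum (fun (_ : ι) (b : Bool) => exp (c * spin b))]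
  simp_rw [hsite, prod_const, card_univ]

def downSpinsEquiv : Finset ι ≃ (ι → Bool) where
  toFun s i := decide (i ∉ s)
  invFun y := {i | y i = false}
  left_inv s := by ext; simp
  right_inv y := by ext; simp

theorem magnetization_downSpinsEquiv (s : Finset ι) :
    magnetization (downSpinsEquiv s) = Fintype.card ι - 2 * #s := by
  have h : ∀ i, spin (downSpinsEquiv s i) = 1 - 2 * if i ∈ s then 1 else 0 := by
    intro i; by_cases hi : i ∈ s <;> norm_num [downSpinsEquiv, spin, hi]
  simp [magnetization, h, sum_sub_distrib, mul_comm]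

theorem sum_magnetization_eq_sum_choose (g : ℝ → ℝ) :
    ∑ y : ι → Bool, g (magnetization y) =
      ∑ m ∈ range (Fintype.card ι + 1), (Fintype.card ι).choose m * g (Fintype.card ι - 2 * m) := by
  rw [← downSpinsEquiv.sum_comp]
  simp only [magnetization_downSpinsEquiv]
  rw [← powerset_univ, sum_powerset_apply_card fun m => g (Fintype.card ι - 2 * m), card_univ]
  simp only [nsmul_eq_mul]

theorem magnetization_eq_spin_add (i : ι) (y : ι → Bool) :
    magnetization y = spin (y i) + magnetization fun j : {j // j ≠ i} => y j :=
  Fintype.sum_eq_add_sum_subtype_ne _ i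

theorem sum_split_site (i : ι) (F : Bool → ({j // j ≠ i} → Bool) → ℝ → ℝ) :
    ∑ y : ι → Bool, F (y i) (fun j => y j) (magnetization y) =
      ∑ a, ∑ z, F a z (spin a + magnetization z) := by
  simp_rw [magnetization_eq_spin_add i, ← Fintype.sum_prod_type']
  exact (Equiv.funSplitAt i Bool).sum_comp fun p => F p.1 p.2 (spin p.1 + magnetization p.2)

theorem sum_split_two_sites {k ℓ : ι} (hkl : k ≠ ℓ) {n : ℕ} (hn : Fintype.card ι = n + 2)
    (F : Bool → Bool → ℝ → ℝ) :
    ∑ y : ι → Bool, F (y k) (y ℓ) (magnetization y) =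
      ∑ a, ∑ b, ∑ m ∈ range (n + 1), n.choose m * F a b (spin a + spin b + (n - 2 * m)) := by
  let ℓ' : {j // j ≠ k} := ⟨ℓ, hkl.symm⟩
  have hcard : Fintype.card {j' : {j // j ≠ k} // j' ≠ ℓ'} = n := by
    simp [Fintype.card_subtype_compl, hn]
  calc ∑ y : ι → Bool, F (y k) (y ℓ) (magnetization y)
      = ∑ a, ∑ z, F a (z ℓ') (spin a + magnetization z) :=
        sum_split_site k fun a z x => F a (z ℓ') x
    _ = ∑ a, ∑ b, ∑ w, F a b (spin a + (spin b + magnetization w)) := by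
        refine sum_congr rfl fun a _ => ?_
        exact sum_split_site ℓ' fun b _ x => F a b (spin a + x)
    _ = _ := by
        refine sum_congr rfl fun a _ => sum_congr rfl fun b _ => ?_
        rw [sum_magnetization_eq_sum_choose fun x => F a b (spin a + (spin b + x)), hcard]
        simp only [add_assoc]

theorem sum_ite_apply_eq_apply {k ℓ : ι} (hkl : k ≠ ℓ) {n : ℕ} (hn : Fintype.card ι = n + 2)
    (f : ℝ → ℝ) (hf : ∀ x, f (-x) = f x) :
    ∑ y : ι → Bool, (if y k = y ℓ then f (magnetization y) else 0) =
      2 * ∑ m ∈ range (n + 1), n.choose m * f (n + 2 - 2 * m) := by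
  refine (sum_split_two_sites hkl hn fun a b x => if a = b then f x else 0).trans ?_
  simp only [Fintype.sum_bool, spin, ↓reduceIte, Bool.true_eq_false, Bool.false_eq_true,
    mul_zero, sum_const_zero, add_zero, zero_add]
  rw [sum_choose_mul_comp_neg n fun x => f (-1 + -1 + x), two_mul]
  congr 1 <;> refine sum_congr rfl fun m _ => ?_
  · ring_nf
  · rw [← hf]; ring_nf

theorem sum_ite_apply_ne_apply {k ℓ : ι} (hkl : k ≠ ℓ) {n : ℕ} (hn : Fintype.card ι = n + 2)
    (f : ℝ → ℝ) :
    ∑ y : ι → Bool, (if y k ≠ y ℓ then f (magnetization y) else 0) =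
      2 * ∑ m ∈ range (n + 1), n.choose m * f (n - 2 * m) := by
  refine (sum_split_two_sites hkl hn fun a b x => if a ≠ b then f x else 0).trans ?_
  simp only [Fintype.sum_bool, spin, ↓reduceIte, ne_eq, not_true_eq_false, Bool.true_eq_false,
    Bool.false_eq_true, not_false_eq_true, mul_zero, sum_const_zero, add_zero, zero_add,
    add_neg_cancel, neg_add_cancel]
  rw [two_mul]

end Magnetization

theorem sum_ite_exp_bicliqueEnergy (l r : ℕ) (θ : ℝ) (P : (Fin r → Bool) → Prop)
    [DecidablePred P] :
    ∑ p : (Fin l → Bool) × (Fin r → Bool), (if P p.2 then exp (bicliqueEnergy l r θ p) else 0) =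
      ∑ y, if P y then (2 * cosh (θ * magnetization y)) ^ l else 0 := by
  rw [Fintype.sum_prod_type_right]
  refine sum_congr rfl fun y _ => ?_
  split_ifs
  · calc _ = ∑ x : Fin l → Bool, exp (θ * magnetization y * magnetization x) :=
          Fintype.sum_congr _ _ fun x => by rw [bicliqueEnergy, mul_right_comm]; rfl
      _ = _ := by rw [sum_exp_mul_magnetization, Fintype.card_fin]
  · simp

theorem biclique_odds_identity_general (l r : ℕ) (θ : ℝ)
    (k ℓ : Fin r) (hkl : k ≠ ℓ) :
    (∑ p : (Fin l → Bool) × (Fin r → Bool),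
        if p.2 k = p.2 ℓ then Real.exp (bicliqueEnergy l r θ p) else 0) /
      (∑ p : (Fin l → Bool) × (Fin r → Bool),
        if p.2 k ≠ p.2 ℓ then Real.exp (bicliqueEnergy l r θ p) else 0)
      = (∑ m ∈ Finset.range (r - 1),
            ((r - 2).choose m : ℝ) * Real.cosh (θ * ((r : ℝ) - 2 * m)) ^ l) /
        (∑ m ∈ Finset.range (r - 1),
            ((r - 2).choose m : ℝ) * Real.cosh (θ * ((r : ℝ) - 2 * m - 2)) ^ l) := by
  obtain ⟨n, rfl⟩ : ∃ n, r = n + 2 := ⟨r - 2, by have := Fin.val_ne_of_ne hkl; omega⟩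
  have heven (x : ℝ) : (2 * cosh (θ * -x)) ^ l = (2 * cosh (θ * x)) ^ l := by
    rw [mul_neg, cosh_neg]
  rw [sum_ite_exp_bicliqueEnergy l _ θ fun y => y k = y ℓ,
    sum_ite_exp_bicliqueEnergy l _ θ fun y => y k ≠ y ℓ,
    sum_ite_apply_eq_apply hkl (Fintype.card_fin _) (fun x => (2 * cosh (θ * x)) ^ l) heven,
    sum_ite_apply_ne_apply hkl (Fintype.card_fin _) fun x => (2 * cosh (θ * x)) ^ l]
  rw [mul_div_mul_left _ _ two_ne_zero]
  simp only [mul_pow, mul_left_comm _ ((2 : ℝ) ^ l), ← mul_sum]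
  rw [mul_div_mul_left _ _ (by positivity), show n + 2 - 1 = n + 1 by omega, Nat.add_sub_cancel]
  push_cast
  simp only [add_sub_right_comm _ (2 : ℝ), sub_add_cancel]

/-- Exact odds `P(X_k X_ℓ = 1)/P(X_k X_ℓ = -1)` for two right-side vertices of an
`l × r` biclique, `r ≥ 3`. -/
theorem biclique_odds_identity (l r : ℕ) (hl : 1 ≤ l) (hr : 3 ≤ r) (θ : ℝ) (hθ : 0 < θ)
    (k ℓ : Fin r) (hkl : k ≠ ℓ) :
    (∑ p : (Fin l → Bool) × (Fin r → Bool),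
        if p.2 k = p.2 ℓ then Real.exp (bicliqueEnergy l r θ p) else 0) /
      (∑ p : (Fin l → Bool) × (Fin r → Bool),
        if p.2 k ≠ p.2 ℓ then Real.exp (bicliqueEnergy l r θ p) else 0)
      = (∑ m ∈ Finset.range (r - 1),
            ((r - 2).choose m : ℝ) * Real.cosh (θ * ((r : ℝ) - 2 * m)) ^ l) /
        (∑ m ∈ Finset.range (r - 1),
            ((r - 2).choose m : ℝ) * Real.cosh (θ * ((r : ℝ) - 2 * m - 2)) ^ l) :=
  biclique_odds_identity_general l r θ k ℓ hkl
end

section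
/- Consider the complete bipartite graph with parts of size l and 2 (so r = 2), with the zero-field ferromagnetic Ising measure at inverse temperature θ > 0. Letting k, ℓ denote the two right-side vertices, P(X_k·X_ℓ = 1)/P(X_k·X_ℓ = −1) = cosh(2θ)^l. Consequently E[X_k·X_ℓ] = (cosh(2θ)^l − 1)/(cosh(2θ)^l + 1). -/
/-- Energy of the zero-field Ising model on the complete bipartite graph with left part
`Fin l` and right part consisting of the two vertices `k, ℓ`. -/
noncomputable def biclique2Energy (l : ℕ) (θ : ℝ)
    (p : (Fin l → Bool) × Bool × Bool) : ℝ :=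
  θ * (∑ u, spin (p.1 u)) * (spin p.2.1 + spin p.2.2)

/-!
Summing out the left spins, which are independent given the right ones, a right configuration
`(a, b)` carries weight `(2 cosh (θ (spin a + spin b)))^l`: this is `(2 cosh 2θ)^l` when the two
right spins agree and `2^l` when they disagree. Both claims are ratios of these two weights.
-/

open Real

lemma sum_exp_mul_sum_spin {ι : Type*} [Fintype ι] [DecidableEq ι] (c : ℝ) :
    ∑ σ : ι → Bool, exp (c * ∑ u, spin (σ u)) = (2 * cosh c) ^ Fintype.card ι := by
  have hprod : ∀ σ : ι → Bool, exp (c * ∑ u, spin (σ u)) = ∏ u, exp (c * spin (σ u)) := by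
    intro σ
    rw [Finset.mul_sum, exp_sum]
  simp_rw [hprod]
  rw [← Fintype.prod_sum (fun _ b => exp (c * spin b)), Finset.prod_const, Finset.card_univ,
    Fintype.sum_bool, cosh_eq]
  simp only [spin, if_true, Bool.false_eq_true, if_false, mul_one, mul_neg]
  ring

lemma cosh_mul_spin_add_spin (θ : ℝ) (a b : Bool) :
    cosh (θ * (spin a + spin b)) = if a = b then cosh (2 * θ) else 1 := by
  cases a <;> cases b <;> norm_num [spin, mul_comm, neg_mul, cosh_neg]

lemma sum_mul_exp_biclique2Energy (l : ℕ) (θ : ℝ) (f : Bool → Bool → ℝ) :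
    ∑ p : (Fin l → Bool) × Bool × Bool, f p.2.1 p.2.2 * exp (biclique2Energy l θ p)
      = (f true true + f false false) * (2 * cosh (2 * θ)) ^ l
        + (f true false + f false true) * 2 ^ l := by
  have hleft : ∀ a b : Bool, ∑ σ : Fin l → Bool, exp (biclique2Energy l θ (σ, a, b))
      = (2 * cosh (θ * (spin a + spin b))) ^ l := by
    intro a b
    have henergy : ∀ σ : Fin l → Bool,
        biclique2Energy l θ (σ, a, b) = θ * (spin a + spin b) * ∑ u, spin (σ u) := by
      intro σ
      rw [biclique2Energy]
      ring
    simp_rw [henergy]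
    rw [sum_exp_mul_sum_spin, Fintype.card_fin]
  rw [Fintype.sum_prod_type, Finset.sum_comm]
  simp_rw [← Finset.mul_sum]
  rw [Fintype.sum_prod_type]
  simp only [hleft, cosh_mul_spin_add_spin, Fintype.sum_bool]
  simp only [if_true, Bool.true_eq_false, Bool.false_eq_true, if_false, mul_one]
  ring

theorem biclique_r2_odds_and_corr_general (l : ℕ) (θ : ℝ) :
    (∑ p : (Fin l → Bool) × Bool × Bool,
        if p.2.1 = p.2.2 then Real.exp (biclique2Energy l θ p) else 0) /
      (∑ p : (Fin l → Bool) × Bool × Bool,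
        if p.2.1 ≠ p.2.2 then Real.exp (biclique2Energy l θ p) else 0)
      = Real.cosh (2 * θ) ^ l
    ∧ (∑ p : (Fin l → Bool) × Bool × Bool,
          spin p.2.1 * spin p.2.2 * Real.exp (biclique2Energy l θ p)) /
        (∑ p : (Fin l → Bool) × Bool × Bool, Real.exp (biclique2Energy l θ p))
      = (Real.cosh (2 * θ) ^ l - 1) / (Real.cosh (2 * θ) ^ l + 1) := by
  have hagree := sum_mul_exp_biclique2Energy l θ fun a b => if a = b then 1 else 0
  have hdisagree := sum_mul_exp_biclique2Energy l θ fun a b => if a ≠ b then 1 else 0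
  have hcorr := sum_mul_exp_biclique2Energy l θ fun a b => spin a * spin b
  have hpartition := sum_mul_exp_biclique2Energy l θ fun _ _ => 1
  simp only [boole_mul, one_mul] at hagree hdisagree hpartition
  rw [hagree, hdisagree, hcorr, hpartition]
  norm_num [spin, mul_pow]
  constructor
  · field_simp
  · rw [div_eq_div_iff (by positivity) (by positivity)]
    ring

/-- For the `l × 2` biclique: the odds `P(X_k X_ℓ = 1)/P(X_k X_ℓ = -1)` equal
`cosh(2θ)^l`, and consequently `E[X_k X_ℓ] = (cosh(2θ)^l - 1)/(cosh(2θ)^l + 1)`. -/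
theorem biclique_r2_odds_and_corr (l : ℕ) (hl : 1 ≤ l) (θ : ℝ) (hθ : 0 < θ) :
    (∑ p : (Fin l → Bool) × Bool × Bool,
        if p.2.1 = p.2.2 then Real.exp (biclique2Energy l θ p) else 0) /
      (∑ p : (Fin l → Bool) × Bool × Bool,
        if p.2.1 ≠ p.2.2 then Real.exp (biclique2Energy l θ p) else 0)
      = Real.cosh (2 * θ) ^ l
    ∧ (∑ p : (Fin l → Bool) × Bool × Bool,
          spin p.2.1 * spin p.2.2 * Real.exp (biclique2Energy l θ p)) /
        (∑ p : (Fin l → Bool) × Bool × Bool, Real.exp (biclique2Energy l θ p))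
      = (Real.cosh (2 * θ) ^ l - 1) / (Real.cosh (2 * θ) ^ l + 1) :=
  biclique_r2_odds_and_corr_general l θ
end

section
/- Fix s ≥ 1 and define, for an integer c with 0 ≤ c ≤ s, F(c) as follows: if s is even, F(c) = lim_{θ→∞} of the standardized overlapping-clique partition ratio, which equals 2^c/binomial(s, s/2)² · Σ_{j even, 0≤j≤2c} binomial(c, j/2)·binomial(s−c, (s−j)/2)². Then for even s, F(c) ≤ 2^c·binomial(s−c, s/2 − ⌊c/2⌋)/binomial(s, s/2), and this bound is at most (1 + 1/(s − 2⌊c/2⌋ + 1))^{⌊c/2⌋} and at most √(2s). -/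
/-- The limiting (θ → ∞) standardized overlapping-clique partition ratio for even `s`
and overlap size `c`. -/
noncomputable def cliqueRatioLimit (s c : ℕ) : ℝ :=
  2 ^ c / ((s.choose (s / 2) : ℝ)) ^ 2 *
    ∑ i ∈ Finset.range (c + 1),
      (c.choose i : ℝ) * (if 2 * i ≤ s then (((s - c).choose (s / 2 - i) : ℕ) : ℝ) else 0) ^ 2

/-- The binomial upper bound `2^c C(s-c, s/2 - ⌊c/2⌋)/C(s, s/2)`. -/
noncomputable def cliqueRatioBound (s c : ℕ) : ℝ :=
  2 ^ c * (((s - c).choose (s / 2 - c / 2) : ℕ) : ℝ) / (s.choose (s / 2) : ℝ)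

/-!
Write `s = 2t`. Bounding the factor `C(s-c, t-i)` of each square by the middle coefficient of
row `s - c` leaves the Vandermonde sum `∑ C(c,i) C(s-c,t-i) = C(s,t)`. Next,
`2^c C(s-c, t-⌊c/2⌋) = 4^⌊c/2⌋ C(2n, n)` with `n = t - ⌊c/2⌋`, and passing from `C(2m, m)` to
`C(2m+2, m+1)` multiplies by `4 / (1 + 1/(2m+1))`, a factor that only grows with `m`. Finally
`C(s-c, ·) ≤ 2^(s-c)` reduces the last bound to `4^t ≤ √(4t) C(2t, t)`.
-/

open Finset

namespace Nat

theorem sum_range_choose_mul_choose (m n k : ℕ) :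
    ∑ i ∈ range (k + 1), m.choose i * n.choose (k - i) = (m + n).choose k := by
  rw [add_choose_eq, Finset.Nat.sum_antidiagonal_eq_sum_range_succ_mk]

theorem sum_range_choose_mul_choose_sq_le (m n k : ℕ) :
    ∑ i ∈ range (k + 1), m.choose i * n.choose (k - i) ^ 2
      ≤ n.choose (n / 2) * (m + n).choose k := by
  rw [← sum_range_choose_mul_choose, mul_sum]
  refine sum_le_sum fun i _ => ?_
  calc m.choose i * n.choose (k - i) ^ 2
      = n.choose (k - i) * (m.choose i * n.choose (k - i)) := by ring
    _ ≤ n.choose (n / 2) * (m.choose i * n.choose (k - i)) := by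
      gcongr; exact choose_le_middle _ _

theorem choose_two_mul_sub_eq_middle {t c : ℕ} (hc : c ≤ 2 * t) :
    (2 * t - c).choose (t - c / 2) = (2 * t - c).choose ((2 * t - c) / 2) := by
  rcases even_or_odd' c with ⟨m, rfl | rfl⟩
  · congr 1; omega
  · rw [← choose_symm (by omega)]; congr 1; omega

theorem centralBinom_succ_eq_two_mul_choose (n : ℕ) :
    centralBinom (n + 1) = 2 * (2 * n + 1).choose (n + 1) := by
  rw [centralBinom_eq_two_mul_choose, show 2 * (n + 1) = 2 * n + 1 + 1 by ring,
    choose_succ_succ', choose_symm_half]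
  exact (two_mul _).symm

theorem two_pow_mul_choose_two_mul_sub {t c : ℕ} (hc : c ≤ 2 * t) :
    2 ^ c * (2 * t - c).choose (t - c / 2) = 4 ^ (c / 2) * centralBinom (t - c / 2) := by
  rcases even_or_odd' c with ⟨m, rfl | rfl⟩
  · rw [show 2 * t - 2 * m = 2 * (t - m) by omega, show 2 * m / 2 = m by omega, pow_mul,
      centralBinom_eq_two_mul_choose]
    norm_num
  · obtain ⟨n, rfl⟩ : ∃ n, t = m + n + 1 := ⟨t - m - 1, by omega⟩
    rw [show 2 * (m + n + 1) - (2 * m + 1) = 2 * n + 1 by omega,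
      show (2 * m + 1) / 2 = m by omega, show m + n + 1 - m = n + 1 by omega,
      centralBinom_succ_eq_two_mul_choose, pow_succ, pow_mul]
    ring

theorem sixteen_pow_le_four_mul_mul_centralBinom_sq {n : ℕ} (hn : 0 < n) :
    16 ^ n ≤ 4 * n * centralBinom n ^ 2 := by
  induction n, hn using le_induction with
  | base => decide
  | succ n hn ih =>
    refine le_of_mul_le_mul_left ?_ (succ_pos n)
    calc (n + 1) * 16 ^ (n + 1) = 16 * (n + 1) * 16 ^ n := by ring
      _ ≤ 16 * (n + 1) * (4 * n * centralBinom n ^ 2) := by gcongr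
      _ = 4 * (n * (n + 1)) * (16 * centralBinom n ^ 2) := by ring
      _ ≤ (2 * n + 1) ^ 2 * (16 * centralBinom n ^ 2) := by gcongr; nlinarith
      _ = 4 * (2 * (2 * n + 1) * centralBinom n) ^ 2 := by ring
      _ = (n + 1) * (4 * (n + 1) * centralBinom (n + 1) ^ 2) := by
        rw [← succ_mul_centralBinom_succ]; ring

end Nat

open Nat (centralBinom)

theorem four_pow_le_sqrt_mul_centralBinom {n : ℕ} (hn : 0 < n) :
    (4 : ℝ) ^ n ≤ √(4 * n) * centralBinom n := by
  have h : ((4 : ℝ) ^ n) ^ 2 ≤ 4 * n * (centralBinom n : ℝ) ^ 2 := by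
    rw [← pow_mul, mul_comm n, pow_mul]
    exact_mod_cast Nat.sixteen_pow_le_four_mul_mul_centralBinom_sq hn
  calc (4 : ℝ) ^ n = √(((4 : ℝ) ^ n) ^ 2) := (Real.sqrt_sq (by positivity)).symm
    _ ≤ √(4 * n * (centralBinom n : ℝ) ^ 2) := Real.sqrt_le_sqrt h
    _ = √(4 * n) * centralBinom n := by
      rw [Real.sqrt_mul (by positivity), Real.sqrt_sq (by positivity)]

theorem four_mul_centralBinom_eq (n : ℕ) :
    (4 : ℝ) * centralBinom n = centralBinom (n + 1) * (1 + 1 / (2 * n + 1)) := by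
  have h : ((n : ℝ) + 1) * centralBinom (n + 1) = 2 * (2 * n + 1) * centralBinom n := by
    exact_mod_cast Nat.succ_mul_centralBinom_succ n
  field_simp
  linear_combination (-2) * h

theorem four_pow_mul_centralBinom_le (n k : ℕ) :
    (4 : ℝ) ^ k * centralBinom n ≤ centralBinom (n + k) * (1 + 1 / (2 * n + 1)) ^ k := by
  induction k with
  | zero => simp
  | succ k ih =>
    have hstep : (1 : ℝ) + 1 / (2 * (n + k : ℕ) + 1) ≤ 1 + 1 / (2 * n + 1) := by
      gcongr; exact_mod_cast Nat.le_add_right n k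
    calc (4 : ℝ) ^ (k + 1) * centralBinom n = 4 * (4 ^ k * centralBinom n) := by ring
      _ ≤ 4 * (centralBinom (n + k) * (1 + 1 / (2 * n + 1)) ^ k) := by gcongr
      _ = centralBinom (n + k + 1) * (1 + 1 / (2 * (n + k : ℕ) + 1))
            * (1 + 1 / (2 * n + 1)) ^ k := by rw [← mul_assoc, four_mul_centralBinom_eq]
      _ ≤ centralBinom (n + k + 1) * (1 + 1 / (2 * n + 1)) * (1 + 1 / (2 * n + 1)) ^ k := by
        gcongr
      _ = centralBinom (n + (k + 1)) * (1 + 1 / (2 * n + 1)) ^ (k + 1) := by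
        rw [← add_assoc]; ring

section cliqueRatio

variable {t c : ℕ}

theorem cliqueRatioLimit_two_mul_eq (hc : c ≤ 2 * t) :
    cliqueRatioLimit (2 * t) c = 2 ^ c / ((2 * t).choose t : ℝ) ^ 2 *
      ((∑ i ∈ range (t + 1), c.choose i * (2 * t - c).choose (t - i) ^ 2 : ℕ) : ℝ) := by
  rw [cliqueRatioLimit, show 2 * t / 2 = t by omega]
  push_cast
  congr 1
  have hc' : range (c + 1) ⊆ range (2 * t + 1) := range_subset_range.2 (by omega)
  have ht' : range (t + 1) ⊆ range (2 * t + 1) := range_subset_range.2 (by omega)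
  rw [sum_subset hc' fun i _ hi => ?_, ← sum_subset ht' fun i _ hi => ?_]
  · refine sum_congr rfl fun i hi => ?_
    rw [if_pos (by simp only [mem_range] at hi; omega)]
  · rw [if_neg (by simp only [mem_range] at hi; omega)]
    simp
  · rw [Nat.choose_eq_zero_of_lt (by simp only [mem_range] at hi; omega)]
    simp

theorem cliqueRatioBound_two_mul_eq (hc : c ≤ 2 * t) :
    cliqueRatioBound (2 * t) c = 4 ^ (c / 2) * centralBinom (t - c / 2) / centralBinom t := by
  rw [cliqueRatioBound, show 2 * t / 2 = t by omega, ← Nat.centralBinom_eq_two_mul_choose]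
  exact_mod_cast congrArg (fun x : ℕ => (x : ℝ) / centralBinom t)
    (Nat.two_pow_mul_choose_two_mul_sub hc)

theorem cliqueRatioLimit_le_cliqueRatioBound (hc : c ≤ 2 * t) :
    cliqueRatioLimit (2 * t) c ≤ cliqueRatioBound (2 * t) c := by
  have key := Nat.sum_range_choose_mul_choose_sq_le c (2 * t - c) t
  rw [Nat.add_sub_cancel' hc, ← Nat.choose_two_mul_sub_eq_middle hc] at key
  have hC : (0 : ℝ) < (2 * t).choose t := by exact_mod_cast Nat.choose_pos (by omega)
  rw [cliqueRatioLimit_two_mul_eq hc, cliqueRatioBound, show 2 * t / 2 = t by omega]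
  calc 2 ^ c / ((2 * t).choose t : ℝ) ^ 2 *
        ((∑ i ∈ range (t + 1), c.choose i * (2 * t - c).choose (t - i) ^ 2 : ℕ) : ℝ)
      ≤ 2 ^ c / ((2 * t).choose t : ℝ) ^ 2 *
        ((2 * t - c).choose (t - c / 2) * (2 * t).choose t) := by
        gcongr; exact_mod_cast key
    _ = 2 ^ c * ((2 * t - c).choose (t - c / 2) : ℕ) / ((2 * t).choose t : ℝ) := by
        field_simp

theorem cliqueRatioBound_le_one_add_pow (hc : c ≤ 2 * t) :
    cliqueRatioBound (2 * t) c
      ≤ (1 + 1 / (((2 * t : ℕ) : ℝ) - 2 * ((c / 2 : ℕ) : ℝ) + 1)) ^ (c / 2) := by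
  have h := four_pow_mul_centralBinom_le (t - c / 2) (c / 2)
  rw [Nat.sub_add_cancel (by omega), Nat.cast_sub (by omega)] at h
  rw [cliqueRatioBound_two_mul_eq hc, div_le_iff₀ (by exact_mod_cast Nat.centralBinom_pos t)]
  refine h.trans_eq ?_
  push_cast
  ring

theorem cliqueRatioBound_le_sqrt (ht : 0 < t) (hc : c ≤ 2 * t) :
    cliqueRatioBound (2 * t) c ≤ √(2 * (2 * t : ℕ)) := by
  have hC : (0 : ℝ) < centralBinom t := by exact_mod_cast Nat.centralBinom_pos t
  have h2 : (2 : ℝ) ^ c * ((2 * t - c).choose (t - c / 2) : ℕ) ≤ 4 ^ t := by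
    calc (2 : ℝ) ^ c * ((2 * t - c).choose (t - c / 2) : ℕ) ≤ 2 ^ c * 2 ^ (2 * t - c) := by
          gcongr; exact_mod_cast Nat.choose_le_two_pow _ _
      _ = 4 ^ t := by rw [← pow_add, Nat.add_sub_cancel' hc, pow_mul]; norm_num
  rw [cliqueRatioBound, show 2 * t / 2 = t by omega, ← Nat.centralBinom_eq_two_mul_choose,
    div_le_iff₀ hC]
  calc _ ≤ (4 : ℝ) ^ t := h2
    _ ≤ √(4 * t) * centralBinom t := four_pow_le_sqrt_mul_centralBinom ht
    _ = √(2 * (2 * t : ℕ)) * centralBinom t := by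
      rw [show (2 : ℝ) * (2 * t : ℕ) = 4 * t by push_cast; ring]

end cliqueRatio

/-- For even `s` and `0 ≤ c ≤ s`: the limiting ratio is at most the binomial bound, which is
in turn at most `(1 + 1/(s - 2⌊c/2⌋ + 1))^⌊c/2⌋` and at most `√(2s)`. -/
theorem clique_ratio_bounds (s c : ℕ) (hs : 0 < s) (hse : Even s) (hc : c ≤ s) :
    cliqueRatioLimit s c ≤ cliqueRatioBound s c
    ∧ cliqueRatioBound s c
        ≤ (1 + 1 / ((s : ℝ) - 2 * ((c / 2 : ℕ) : ℝ) + 1)) ^ (c / 2)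
    ∧ cliqueRatioBound s c ≤ Real.sqrt (2 * s) := by
  obtain ⟨t, rfl⟩ := even_iff_two_dvd.mp hse
  exact ⟨cliqueRatioLimit_le_cliqueRatioBound hc, cliqueRatioBound_le_one_add_pow hc,
    cliqueRatioBound_le_sqrt (by omega) hc⟩
end
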